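/- For x > 0 and ν > 0, ∫₀^x J_ν(t)²/t dt = (1/(2ν)) ∑_{n=0}^∞ ε_n J_{ν+n}(x)², where ε₀ = 1 and ε_n = 2 for n ≥ 1, and the series on the right converges. -/

import Mathlib

open MeasureTheory Real Filter Set Topology

noncomputable def besselJ (ν x : ℝ) : ℝ :=
  (x / 2) ^ ν * ∑' k : ℕ, (-1 : ℝ) ^ k * (x ^ 2 / 4) ^ k / (k.factorial * Real.Gamma (ν + k + 1))

noncomputable def besselY (ν x : ℝ) : ℝ :=
  limUnder (𝓝[{μ : ℝ | ∀ n : ℤ, μ ≠ (n : ℝ)}] ν)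
    (fun μ => (besselJ μ x * Real.cos (μ * Real.pi) - besselJ (-μ) x) / Real.sin (μ * Real.pi))


/-!
The recurrences `J_μ' = (μ/t) J_μ - J_{μ+1}` and `2 J_μ' = J_{μ-1} - J_{μ+1}` make the derivative
of `S_N(t) = ∑_{n ≤ N} ε_n J_{ν+n}(t)²` telescope to `2ν J_ν(t)²/t - 2 J_{ν+N}(t) J_{ν+N+1}(t)`.
As `S_N(0) = 0`, integrating over `[0, x]` gives
`S_N(x) = 2ν ∫₀ˣ J_ν²/t - 2 ∫₀ˣ J_{ν+N} J_{ν+N+1}`, and the last integral is `O((x/2)^{2N} / N!)`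
by the bound `|J_μ(t)| ≤ (t/2)^μ e^{t²/4} / Γ(μ+1)`.
-/

open scoped Nat

noncomputable def besselCoeff (μ : ℝ) (k : ℕ) : ℝ := (-1) ^ k / (k ! * Gamma (μ + k + 1))

noncomputable def besselSeries (μ u : ℝ) : ℝ := ∑' k : ℕ, besselCoeff μ k * u ^ k

theorem besselJ_eq_rpow_mul_besselSeries (μ x : ℝ) :
    besselJ μ x = (x / 2) ^ μ * besselSeries μ (x ^ 2 / 4) := by
  unfold besselJ besselSeries besselCoeff
  congr 1
  exact tsum_congr fun k => by ring

theorem Gamma_add_one_mul_factorial_le {μ : ℝ} (hμ : 0 ≤ μ) (k : ℕ) :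
    Gamma (μ + 1) * k ! ≤ Gamma (μ + k + 1) := by
  induction k with
  | zero => simp
  | succ k ih =>
    have hk : μ + k + 1 ≠ 0 := by positivity
    calc Gamma (μ + 1) * (k + 1)! = (k + 1) * (Gamma (μ + 1) * k !) := by
          push_cast [Nat.factorial_succ]; ring
      _ ≤ (μ + k + 1) * Gamma (μ + k + 1) := by gcongr; linarith
      _ = Gamma (μ + (k + 1 : ℕ) + 1) := by
          rw [Nat.cast_succ, ← add_assoc, Gamma_add_one hk]

theorem abs_besselCoeff_le {μ : ℝ} (hμ : 0 ≤ μ) (k : ℕ) :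
    |besselCoeff μ k| ≤ (k ! : ℝ)⁻¹ / Gamma (μ + 1) := by
  have hΓ : 0 < Gamma (μ + 1) := Gamma_pos_of_pos (by linarith)
  have hk : (1 : ℝ) ≤ k ! := by exact_mod_cast k.factorial_pos
  have hle : Gamma (μ + 1) ≤ Gamma (μ + k + 1) :=
    le_trans (le_mul_of_one_le_right hΓ.le hk) (Gamma_add_one_mul_factorial_le hμ k)
  rw [besselCoeff, abs_div, abs_pow, abs_neg, abs_one, one_pow, abs_of_pos (by positivity),
    inv_eq_one_div, div_div]
  gcongr

theorem norm_besselCoeff_mul_pow_le {μ : ℝ} (hμ : 0 ≤ μ) (k : ℕ) (u : ℝ) :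
    ‖besselCoeff μ k * u ^ k‖ ≤ |u| ^ k / k ! / Gamma (μ + 1) := by
  rw [norm_mul, norm_pow, Real.norm_eq_abs, Real.norm_eq_abs]
  calc |besselCoeff μ k| * |u| ^ k ≤ (k ! : ℝ)⁻¹ / Gamma (μ + 1) * |u| ^ k := by
        gcongr; exact abs_besselCoeff_le hμ k
    _ = |u| ^ k / k ! / Gamma (μ + 1) := by ring

theorem summable_besselCoeff_mul_pow {μ : ℝ} (hμ : 0 ≤ μ) (u : ℝ) :
    Summable fun k => besselCoeff μ k * u ^ k :=
  .of_norm_bounded ((Real.summable_pow_div_factorial |u|).div_const _)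
    (norm_besselCoeff_mul_pow_le hμ · u)

theorem abs_besselSeries_le {μ : ℝ} (hμ : 0 ≤ μ) (u : ℝ) :
    |besselSeries μ u| ≤ exp |u| / Gamma (μ + 1) :=
  tsum_of_norm_bounded
    ((Real.exp_eq_exp_ℝ ▸ NormedSpace.expSeries_div_hasSum_exp |u|).div_const _)
    (norm_besselCoeff_mul_pow_le hμ · u)

theorem succ_mul_besselCoeff_succ (μ : ℝ) (k : ℕ) :
    (k + 1) * besselCoeff μ (k + 1) = -besselCoeff (μ + 1) k := by
  rw [besselCoeff, besselCoeff, Nat.factorial_succ, pow_succ, Nat.cast_mul, Nat.cast_succ,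
    show μ + (k + 1) + 1 = μ + 1 + k + 1 by ring, mul_assoc, mul_div_assoc',
    mul_div_mul_left _ _ (by positivity)]
  ring

theorem add_mul_besselCoeff {μ : ℝ} {k : ℕ} (h : μ + k ≠ 0) :
    (μ + k) * besselCoeff μ k = besselCoeff (μ - 1) k := by
  rw [besselCoeff, besselCoeff, Gamma_add_one h, show μ - 1 + k + 1 = μ + k by ring,
    mul_div_assoc', mul_left_comm, mul_div_mul_left _ _ h]

theorem hasSum_succ_mul_besselCoeff_succ {μ : ℝ} (hμ : -1 ≤ μ) (u : ℝ) :
    HasSum (fun k : ℕ => (k + 1) * besselCoeff μ (k + 1) * u ^ k) (-besselSeries (μ + 1) u) := by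
  simp only [succ_mul_besselCoeff_succ, neg_mul]
  exact (summable_besselCoeff_mul_pow (by linarith) u).hasSum.neg

theorem summable_natCast_mul_pow_sub_one_div_factorial (r : ℝ) :
    Summable fun k : ℕ => k * r ^ (k - 1) / k ! := by
  refine (summable_nat_add_iff 1).1 ((Real.summable_pow_div_factorial r).congr fun k => ?_)
  rw [Nat.add_sub_cancel, Nat.factorial_succ, Nat.cast_mul, Nat.cast_succ]
  field_simp

theorem hasDerivAt_besselSeries {μ : ℝ} (hμ : 0 ≤ μ) (u : ℝ) :
    HasDerivAt (besselSeries μ) (-besselSeries (μ + 1) u) u := by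
  set R := |u| + 1
  have hu : u ∈ Ioo (-R) R := abs_lt.1 (lt_add_one _)
  have hbound : ∀ (k : ℕ), ∀ y ∈ Ioo (-R) R,
      ‖besselCoeff μ k * (k * y ^ (k - 1))‖ ≤ k * R ^ (k - 1) / k ! / Gamma (μ + 1) := by
    intro k y hy
    have hyR : |y| ≤ R := (abs_lt.2 hy).le
    rw [norm_mul, norm_mul, norm_pow, Real.norm_eq_abs, Real.norm_eq_abs, Real.norm_eq_abs,
      Nat.abs_cast]
    calc |besselCoeff μ k| * (k * |y| ^ (k - 1))
        ≤ (k ! : ℝ)⁻¹ / Gamma (μ + 1) * (k * R ^ (k - 1)) := by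
          gcongr; exact abs_besselCoeff_le hμ k
      _ = k * R ^ (k - 1) / k ! / Gamma (μ + 1) := by ring
  have h := hasDerivAt_tsum_of_isPreconnected
    ((summable_natCast_mul_pow_sub_one_div_factorial R).div_const _) isOpen_Ioo
    (convex_Ioo _ _).isPreconnected (fun k y _ => (hasDerivAt_pow k y).const_mul _) hbound hu
    (summable_besselCoeff_mul_pow hμ u) hu
  refine h.congr_deriv (HasSum.tsum_eq ?_)
  rw [← hasSum_nat_add_iff' 1]
  simpa [mul_left_comm, mul_assoc] using hasSum_succ_mul_besselCoeff_succ (by linarith) u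

theorem hasSum_natCast_mul_besselCoeff {μ : ℝ} (hμ : -1 ≤ μ) (u : ℝ) :
    HasSum (fun k : ℕ => k * besselCoeff μ k * u ^ k) (-(u * besselSeries (μ + 1) u)) := by
  rw [← hasSum_nat_add_iff' 1]
  simpa [pow_succ, mul_assoc, mul_comm, mul_left_comm]
    using (hasSum_succ_mul_besselCoeff_succ hμ u).mul_left u

theorem besselSeries_sub_one {μ : ℝ} (hμ : 0 < μ) (u : ℝ) :
    besselSeries (μ - 1) u = μ * besselSeries μ u - u * besselSeries (μ + 1) u := by
  have hcoeff (k : ℕ) : besselCoeff (μ - 1) k * u ^ k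
      = μ * (besselCoeff μ k * u ^ k) + k * besselCoeff μ k * u ^ k := by
    rw [← add_mul_besselCoeff (by positivity)]
    ring
  have h := ((summable_besselCoeff_mul_pow hμ.le u).hasSum.mul_left μ).add
    (hasSum_natCast_mul_besselCoeff (by linarith) u)
  simp only [← hcoeff] at h
  rw [sub_eq_add_neg]
  exact h.tsum_eq

theorem hasDerivAt_besselJ {μ y : ℝ} (hμ : 0 ≤ μ) (hy : 0 < y) :
    HasDerivAt (besselJ μ) (μ / y * besselJ μ y - besselJ (μ + 1) y) y := by
  have hy2 : y / 2 ≠ 0 := by positivity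
  have hpow := ((hasDerivAt_id' y).div_const 2).rpow_const (p := μ) (Or.inl hy2)
  have hser := (hasDerivAt_besselSeries hμ (y ^ 2 / 4)).comp y ((hasDerivAt_pow 2 y).div_const 4)
  refine ((hpow.mul hser).congr_deriv ?_).congr_of_eventuallyEq
    (.of_forall (besselJ_eq_rpow_mul_besselSeries μ))
  rw [Function.comp_apply, besselJ_eq_rpow_mul_besselSeries, besselJ_eq_rpow_mul_besselSeries,
    rpow_sub_one hy2, rpow_add_one hy2]
  field_simp
  ring

theorem besselJ_sub_one_add_besselJ_add_one {μ y : ℝ} (hμ : 0 < μ) (hy : 0 < y) :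
    besselJ (μ - 1) y + besselJ (μ + 1) y = 2 * μ / y * besselJ μ y := by
  have hy2 : y / 2 ≠ 0 := by positivity
  simp only [besselJ_eq_rpow_mul_besselSeries, besselSeries_sub_one hμ, rpow_sub_one hy2,
    rpow_add_one hy2]
  field_simp
  ring

theorem hasDerivAt_besselJ_eq_half_sub {μ y : ℝ} (hμ : 0 < μ) (hy : 0 < y) :
    HasDerivAt (besselJ μ) ((besselJ (μ - 1) y - besselJ (μ + 1) y) / 2) y := by
  refine (hasDerivAt_besselJ hμ.le hy).congr_deriv ?_
  linear_combination -(besselJ_sub_one_add_besselJ_add_one hμ hy) / 2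

theorem continuous_besselJ {μ : ℝ} (hμ : 0 ≤ μ) : Continuous (besselJ μ) := by
  have hser : Continuous (besselSeries μ) :=
    continuous_iff_continuousAt.2 fun u => (hasDerivAt_besselSeries hμ u).continuousAt
  rw [show besselJ μ = fun x => (x / 2) ^ μ * besselSeries μ (x ^ 2 / 4) from
    funext (besselJ_eq_rpow_mul_besselSeries μ)]
  exact ((continuous_rpow_const hμ).comp (continuous_id.div_const 2)).mul
    (hser.comp ((continuous_pow 2).div_const 4))

theorem besselJ_zero_right {μ : ℝ} (hμ : 0 < μ) : besselJ μ 0 = 0 := by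
  simp [besselJ, zero_rpow hμ.ne']

theorem abs_besselJ_le {μ t : ℝ} (hμ : 0 ≤ μ) (ht : 0 ≤ t) :
    |besselJ μ t| ≤ (t / 2) ^ μ * (exp (t ^ 2 / 4) / Gamma (μ + 1)) := by
  rw [besselJ_eq_rpow_mul_besselSeries, abs_mul, abs_of_nonneg (by positivity)]
  gcongr
  have h := abs_besselSeries_le hμ (t ^ 2 / 4)
  rwa [abs_of_nonneg (by positivity : 0 ≤ t ^ 2 / 4)] at h

theorem tendsto_rpow_add_natCast_div_Gamma {ν c : ℝ} (hν : 0 ≤ ν) (hc : 0 < c) :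
    Tendsto (fun N : ℕ => c ^ (ν + N) / Gamma (ν + N + 1)) atTop (𝓝 0) := by
  have hΓ : 0 < Gamma (ν + 1) := Gamma_pos_of_pos (by linarith)
  have hlim := (FloorSemiring.tendsto_pow_div_factorial_atTop c).const_mul (c ^ ν / Gamma (ν + 1))
  rw [mul_zero] at hlim
  refine squeeze_zero (fun N => ?_) (fun N => ?_) hlim
  · have : 0 < Gamma (ν + N + 1) := Gamma_pos_of_pos (by positivity)
    positivity
  · calc c ^ (ν + N) / Gamma (ν + N + 1) ≤ c ^ (ν + N) / (Gamma (ν + 1) * N !) := by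
          gcongr; exact Gamma_add_one_mul_factorial_le hν N
      _ = c ^ ν / Gamma (ν + 1) * (c ^ N / N !) := by
          rw [rpow_add hc, rpow_natCast]; ring

theorem tendsto_intervalIntegral_besselJ_mul_besselJ_add_one {ν x : ℝ} (hν : 0 ≤ ν) (hx : 0 < x) :
    Tendsto (fun N : ℕ => ∫ t in (0)..x, besselJ (ν + N) t * besselJ (ν + N + 1) t)
      atTop (𝓝 0) := by
  set b : ℝ → ℝ := fun μ => (x / 2) ^ μ * (exp (x ^ 2 / 4) / Gamma (μ + 1))
  have hb : Tendsto (fun N : ℕ => b (ν + N)) atTop (𝓝 0) := by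
    simpa [b, mul_div_assoc', div_mul_eq_mul_div] using
      (tendsto_rpow_add_natCast_div_Gamma hν (c := x / 2) (by positivity)).mul_const
        (exp (x ^ 2 / 4))
  have hb' : Tendsto (fun N : ℕ => b (ν + N + 1)) atTop (𝓝 0) :=
    (hb.comp (tendsto_add_atTop_nat 1)).congr fun N => by simp [add_assoc]
  have hJ {μ : ℝ} (hμ : 0 ≤ μ) {t : ℝ} (ht : t ∈ uIoc 0 x) : ‖besselJ μ t‖ ≤ b μ := by
    rw [uIoc_of_le hx.le] at ht
    have hΓ : 0 < Gamma (μ + 1) := Gamma_pos_of_pos (by linarith)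
    refine (abs_besselJ_le hμ ht.1.le).trans ?_
    show _ ≤ (x / 2) ^ μ * (exp (x ^ 2 / 4) / Gamma (μ + 1))
    gcongr
    all_goals linarith [ht.1, ht.2]
  refine squeeze_zero_norm (fun N => intervalIntegral.norm_integral_le_of_norm_le_const
    fun t ht => (norm_mul_le _ _).trans (mul_le_mul (hJ (by positivity) ht)
      (hJ (by positivity) ht) (norm_nonneg _) ((norm_nonneg _).trans (hJ (by positivity) ht)))) ?_
  simpa using (hb.mul hb').mul_const |x - 0|

theorem hasDerivAt_sum_range_besselJ_sq {ν t : ℝ} (hν : 0 ≤ ν) (ht : 0 < t) (N : ℕ) :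
    HasDerivAt
      (fun s => ∑ n ∈ Finset.range (N + 1), (if n = 0 then (1 : ℝ) else 2) * besselJ (ν + n) s ^ 2)
      (2 * ν * (besselJ ν t ^ 2 / t) - 2 * (besselJ (ν + N) t * besselJ (ν + N + 1) t)) t := by
  induction N with
  | zero =>
    simp only [zero_add, Finset.sum_range_one, ↓reduceIte, Nat.cast_zero, add_zero, one_mul]
    refine ((hasDerivAt_besselJ hν ht).fun_pow 2).congr_deriv ?_
    field_simp
    ring
  | succ N ih =>
    simp only [Finset.sum_range_succ _ (N + 1), Nat.add_one_ne_zero, if_false]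
    have hμ : 0 < ν + (N + 1 : ℕ) := by positivity
    refine (ih.add (((hasDerivAt_besselJ_eq_half_sub hμ ht).fun_pow 2).const_mul 2)).congr_deriv ?_
    rw [show ν + (N + 1 : ℕ) - 1 = ν + N by push_cast; ring]
    push_cast [← add_assoc]
    ring

theorem sum_range_besselJ_sq_add_integral_eq {ν x : ℝ} (hν : 0 < ν) (hx : 0 ≤ x) (N : ℕ) :
    ∑ n ∈ Finset.range (N + 1), (if n = 0 then (1 : ℝ) else 2) * besselJ (ν + n) x ^ 2
      + 2 * ∫ t in (0)..x, besselJ (ν + N) t * besselJ (ν + N + 1) t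
      = 2 * ν * ∫ t in (0)..x, besselJ ν t ^ 2 / t := by
  set g := fun t => besselJ (ν + N) t * besselJ (ν + N + 1) t
  have hg : Continuous g :=
    (continuous_besselJ (by positivity)).mul (continuous_besselJ (by positivity))
  set H := fun s => ∑ n ∈ Finset.range (N + 1), (if n = 0 then (1 : ℝ) else 2) *
    besselJ (ν + n) s ^ 2 + 2 * ∫ t in (0)..s, g t
  have hH : ∀ t ∈ Ioo 0 x, HasDerivAt H (2 * ν * (besselJ ν t ^ 2 / t)) t := fun t ht =>
    ((hasDerivAt_sum_range_besselJ_sq hν.le ht.1 N).add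
      ((hg.integral_hasStrictDerivAt 0 t).hasDerivAt.const_mul 2)).congr_deriv (by ring)
  have hHcont : Continuous H := by
    refine (continuous_finsetSum _ fun n _ =>
      continuous_const.mul ((continuous_besselJ (by positivity)).pow 2)).add
      (continuous_const.mul ?_)
    exact continuous_iff_continuousAt.2 fun s =>
      (hg.integral_hasStrictDerivAt 0 s).hasDerivAt.continuousAt
  have hH0 : H 0 = 0 := by
    simp only [H, intervalIntegral.integral_same, mul_zero, add_zero]
    exact Finset.sum_eq_zero fun n _ => by rw [besselJ_zero_right (by positivity)]; ring
  -- `J_ν² / t` is integrable near `0` because `2ν J_ν² / t` is the nonnegative derivative of the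
  -- continuous function `H`.
  have hint := intervalIntegral.integrableOn_deriv_of_nonneg hHcont.continuousOn hH fun t ht => by
    have := ht.1
    positivity
  have hFTC := intervalIntegral.integral_eq_sub_of_hasDerivAt_of_le hx hHcont.continuousOn hH
    ((intervalIntegrable_iff_integrableOn_Ioc_of_le hx).2 hint)
  rw [intervalIntegral.integral_const_mul, hH0, sub_zero] at hFTC
  exact hFTC.symm

theorem stmt6 (ν x : ℝ) (hν : 0 < ν) (hx : 0 < x) :
    HasSum (fun n : ℕ => (if n = 0 then (1:ℝ) else 2) * besselJ (ν + n) x ^ 2)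
      (2 * ν * ∫ t in Set.Ioo (0:ℝ) x, besselJ ν t ^ 2 / t) := by
  have hpartial (N : ℕ) :
      ∑ n ∈ Finset.range (N + 1), (if n = 0 then (1 : ℝ) else 2) * besselJ (ν + n) x ^ 2
        = 2 * ν * (∫ t in Ioo 0 x, besselJ ν t ^ 2 / t)
          - 2 * ∫ t in (0)..x, besselJ (ν + N) t * besselJ (ν + N + 1) t := by
    rw [← integral_Ioc_eq_integral_Ioo, ← intervalIntegral.integral_of_le hx.le,
      ← sum_range_besselJ_sq_add_integral_eq hν hx.le N]
    ring
  rw [hasSum_iff_tendsto_nat_of_nonneg (fun n => by positivity), ← tendsto_add_atTop_iff_nat 1]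
  simp only [hpartial]
  simpa using
    (tendsto_intervalIntegral_besselJ_mul_besselJ_add_one hν.le hx).const_mul 2 |>.const_sub
      (2 * ν * ∫ t in Ioo 0 x, besselJ ν t ^ 2 / t)
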